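/- For 1 < r < R and f holomorphic on the annulus {1 < |w| < R} with Laurent expansion f(w) = a_0 + Σ_{n≥1} a_n(w^n + w^{-n}), if Re(f) > 0 on the annulus then for each n ≥ 1, |a_n|(r^n − r^{-n}) ≤ 2 Re(a_0). (The Cauchy integral on the circle |w| = r gives |a_n r^{-n} + \overline{a_n} r^n| ≤ (1/π)∫_0^{2π} Re(f(r e^{iθ})) dθ = 2 Re(a_0).) -/

import Mathlib

/-!
On the circle `|w| = r` the symmetric series converges absolutely and uniformly, so it can be
integrated term by term: the `k`-th Fourier coefficient of `θ ↦ f (r e^{iθ})` is `a_{|k|} r^k`.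
Hence the `n`-th Fourier coefficient of the positive function `θ ↦ Re f (r e^{iθ})` is
`(a_n r^n + conj a_n r^{-n}) / 2`, and it is bounded in modulus by the mean value `Re a_0`.
The reverse triangle inequality turns this into the bound on `‖a_n‖`.
-/

open Complex Real intervalIntegral
open scoped ComplexConjugate

lemma integral_exp_int_mul_I (k : ℤ) :
    ∫ θ in (0 : ℝ)..2 * π, exp (k * θ * I) = if k = 0 then (2 * π : ℂ) else 0 := by
  rcases eq_or_ne k 0 with rfl | hk
  · simp
  have hkI : (k : ℂ) * I ≠ 0 := by simp [I_ne_zero, hk]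
  have h : ∀ θ : ℝ, (k : ℂ) * θ * I = k * I * θ := fun θ => by ring
  simp_rw [if_neg hk, h, integral_exp_mul_complex hkI]
  have : (k : ℂ) * I * ((2 * π : ℝ) : ℂ) = k * (2 * π * I) := by push_cast; ring
  rw [this, exp_int_mul_two_pi_mul_I]
  simp

lemma integral_circleMap_zero_zpow_mul_exp (r : ℝ) (m k : ℤ) :
    ∫ θ in (0 : ℝ)..2 * π, circleMap 0 r θ ^ m * exp (-(k * θ * I))
      = if m = k then 2 * π * (r : ℂ) ^ k else 0 := by
  have h : ∀ θ : ℝ, circleMap 0 r θ ^ m * exp (-(k * θ * I))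
      = (r : ℂ) ^ m * exp ((m - k : ℤ) * θ * I) := fun θ => by
    rw [circleMap_zero_zpow, circleMap_zero, mul_assoc, ← Complex.exp_add]; push_cast; ring_nf
  simp_rw [h, integral_const_mul, integral_exp_int_mul_I, sub_eq_zero]
  split_ifs with hmk
  · rw [hmk]; ring
  · ring

lemma norm_mul_circleMap_zero_zpow (c : ℂ) (r θ : ℝ) (m : ℤ) :
    ‖c * circleMap 0 r θ ^ m‖ = ‖c‖ * |r| ^ m := by
  rw [norm_mul, norm_zpow, norm_circleMap_zero]

section LaurentSeries

variable {c : ℤ → ℂ} {r : ℝ} {F : ℝ → ℂ}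

lemma continuous_of_hasSum_laurent_circleMap (hc : Summable fun m => ‖c m‖ * |r| ^ m)
    (hF : ∀ θ, HasSum (fun m => c m * circleMap 0 r θ ^ m) (F θ)) : Continuous F := by
  have hterm : ∀ m, Continuous fun θ => c m * circleMap 0 r θ ^ m := fun m => by
    simp_rw [circleMap_zero_zpow, circleMap_zero]
    fun_prop
  rw [funext fun θ => (hF θ).tsum_eq.symm]
  exact continuous_tsum hterm hc fun m θ => (norm_mul_circleMap_zero_zpow _ _ _ _).le

lemma integral_mul_exp_of_hasSum_laurent_circleMap (hc : Summable fun m => ‖c m‖ * |r| ^ m)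
    (hF : ∀ θ, HasSum (fun m => c m * circleMap 0 r θ ^ m) (F θ)) (k : ℤ) :
    ∫ θ in (0 : ℝ)..2 * π, F θ * exp (-(k * θ * I)) = 2 * π * (c k * (r : ℂ) ^ k) := by
  have hnorm : ∀ m θ, ‖c m * (circleMap 0 r θ ^ m * exp (-(k * θ * I)))‖ = ‖c m‖ * |r| ^ m :=
    fun m θ => by
      rw [← mul_assoc, norm_mul, norm_mul_circleMap_zero_zpow, norm_exp]
      simp
  have h := hasSum_integral_of_dominated_convergence (μ := MeasureTheory.volume) (a := 0)
    (b := 2 * π) (F := fun m θ => c m * (circleMap 0 r θ ^ m * exp (-(k * θ * I))))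
    (fun m _ => ‖c m‖ * |r| ^ m)
    (fun m => by
      simp_rw [circleMap_zero_zpow, circleMap_zero]
      exact Continuous.aestronglyMeasurable (by fun_prop))
    (fun m => .of_forall fun θ _ => (hnorm m θ).le) (.of_forall fun _ _ => hc)
    intervalIntegrable_const
    (.of_forall fun θ _ => by
      simpa only [mul_assoc (c _)] using (hF θ).mul_right (exp (-(k * θ * I))))
  simp_rw [integral_const_mul, integral_circleMap_zero_zpow_mul_exp, mul_ite, mul_zero] at h
  have hk : HasSum (fun m => if m = k then c m * (2 * π * (r : ℂ) ^ k) else 0)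
      (c k * (2 * π * (r : ℂ) ^ k)) := by
    convert hasSum_ite_eq k (c k * (2 * π * (r : ℂ) ^ k)) using 2 with m
    split_ifs with hm <;> simp [hm]
  rw [h.unique hk]
  ring

end LaurentSeries

section SymmetricLaurentSeries

variable {R : ℝ} {a : ℕ → ℂ} {f : ℂ → ℂ}

lemma summable_norm_mul_zpow_natAbs_of_hasSum_symm
    (hf : ∀ w : ℂ, 1 < ‖w‖ → ‖w‖ < R →
      HasSum (fun n : ℕ => a (n + 1) * (w ^ (n + 1) + (w⁻¹) ^ (n + 1))) (f w - a 0))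
    {ρ : ℝ} (hρ : 1 < ρ) (hρR : ρ < R) :
    Summable fun m : ℤ => ‖a m.natAbs‖ * ρ ^ m := by
  have hρ0 : 0 < ρ := one_pos.trans hρ
  have hnorm : ‖(ρ : ℂ)‖ = ρ := by rw [norm_real, Real.norm_of_nonneg hρ0.le]
  have hsymm := (hf ρ (by rwa [hnorm]) (by rwa [hnorm])).summable.norm
  have hnat : Summable fun n : ℕ => ‖a n‖ * ρ ^ n := by
    refine (summable_nat_add_iff 1).mp
      (hsymm.of_nonneg_of_le (fun n => by positivity) fun n => ?_)
    have : (ρ : ℂ) ^ (n + 1) + (ρ : ℂ)⁻¹ ^ (n + 1) = ((ρ ^ (n + 1) + ρ⁻¹ ^ (n + 1) : ℝ) : ℂ) := by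
      push_cast; rfl
    rw [norm_mul, this, norm_real, Real.norm_of_nonneg (by positivity)]
    gcongr
    exact le_add_of_nonneg_right (by positivity)
  refine summable_int_iff_summable_nat_and_neg.mpr ⟨by simpa using hnat, ?_⟩
  refine hnat.of_nonneg_of_le (fun n => by positivity) fun n => ?_
  simp only [Int.natAbs_neg, Int.natAbs_natCast, zpow_neg, zpow_natCast]
  gcongr
  exact (inv_le_one_of_one_le₀ (one_le_pow₀ hρ.le)).trans (one_le_pow₀ hρ.le)

lemma hasSum_laurent_of_hasSum_symm
    (hf : ∀ w : ℂ, 1 < ‖w‖ → ‖w‖ < R →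
      HasSum (fun n : ℕ => a (n + 1) * (w ^ (n + 1) + (w⁻¹) ^ (n + 1))) (f w - a 0))
    {w : ℂ} (hw : 1 < ‖w‖) (hwR : ‖w‖ < R) :
    HasSum (fun m : ℤ => a m.natAbs * w ^ m) (f w) := by
  have hsum : Summable fun m : ℤ => a m.natAbs * w ^ m := by
    refine Summable.of_norm ?_
    simpa only [norm_mul, norm_zpow] using summable_norm_mul_zpow_natAbs_of_hasSum_symm hf hw hwR
  -- grouping the terms `m` and `-m` recovers the symmetric series of `hf`
  have hpairs := (hasSum_nat_add_iff' 1).mpr hsum.hasSum.nat_add_neg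
  simp only [Int.natAbs_neg, Int.natAbs_natCast, zpow_neg, zpow_natCast, ← inv_pow, ← mul_add,
    Finset.sum_range_one, Int.natAbs_zero, zpow_zero, pow_zero, mul_one] at hpairs
  have hsum_eq := (hf w hw hwR).unique hpairs
  convert hsum.hasSum using 1
  linear_combination hsum_eq

end SymmetricLaurentSeries

section RealPart

variable {u : ℝ → ℂ} {a b : ℝ}

lemma integral_re_mul_exp (hu : Continuous u) (k : ℤ) :
    ∫ θ in a..b, ((u θ).re : ℂ) * exp (-(k * θ * I))
      = ((∫ θ in a..b, u θ * exp (-(k * θ * I)))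
          + conj (∫ θ in a..b, u θ * exp (k * θ * I))) / 2 := by
  have hexp : Continuous fun θ : ℝ => exp (-(k * θ * I)) := by fun_prop
  have hconj : ∀ θ : ℝ, conj (u θ * exp (k * θ * I)) = conj (u θ) * exp (-(k * θ * I)) :=
    fun θ => by rw [map_mul, ← exp_conj]; simp
  simp_rw [re_eq_add_conj, div_mul_eq_mul_div, add_mul, ← intervalIntegral_conj, hconj]
  rw [integral_div, integral_add]
  · exact (hu.mul hexp).intervalIntegrable _ _
  · exact ((continuous_conj.comp hu).mul hexp).intervalIntegrable _ _

lemma norm_integral_re_mul_exp_le (hu : Continuous u) (hab : a ≤ b)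
    (hre : ∀ θ, 0 ≤ (u θ).re) (k : ℤ) :
    ‖∫ θ in a..b, ((u θ).re : ℂ) * exp (-(k * θ * I))‖ ≤ (∫ θ in a..b, u θ).re := by
  rw [← RCLike.re_to_complex, ← intervalIntegral_re (hu.intervalIntegrable a b)]
  refine norm_integral_le_of_norm_le hab (.of_forall fun θ _ => ?_)
    ((continuous_re.comp hu).intervalIntegrable _ _)
  rw [norm_mul, norm_real, Real.norm_of_nonneg (hre θ), norm_exp]
  simp

lemma norm_add_conj_le_two_re_of_re_nonneg {c : ℤ → ℂ} (hu : Continuous u)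
    (hre : ∀ θ, 0 ≤ (u θ).re)
    (hc : ∀ k : ℤ, ∫ θ in (0 : ℝ)..2 * π, u θ * exp (-(k * θ * I)) = 2 * π * c k) (k : ℤ) :
    ‖c k + conj (c (-k))‖ ≤ 2 * (c 0).re := by
  have h := norm_integral_re_mul_exp_le hu two_pi_pos.le hre k
  have hneg := hc (-k)
  have hmean := hc 0
  simp only [Int.cast_neg, neg_mul, neg_neg] at hneg
  simp only [Int.cast_zero, zero_mul, neg_zero, Complex.exp_zero, mul_one] at hmean
  rw [integral_re_mul_exp hu, hc, hneg, hmean] at h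
  have hcoeff : (2 * π * c k + conj (2 * π * c (-k))) / 2 = π * (c k + conj (c (-k))) := by
    simp only [map_mul, conj_ofReal, map_ofNat]
    ring
  have hmean_re : (2 * π * c 0).re = π * (2 * (c 0).re) := by
    simp only [mul_re, re_ofNat, ofReal_re, im_ofNat, ofReal_im, mul_zero, sub_zero, mul_im,
      zero_mul, add_zero]
    ring
  rw [hcoeff, norm_mul, norm_real, Real.norm_of_nonneg pi_pos.le, hmean_re] at h
  exact le_of_mul_le_mul_left h pi_pos

end RealPart

lemma norm_mul_sub_inv_le_norm_mul_add_conj_mul_inv (z : ℂ) {s : ℝ} (hs : 0 < s) :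
    ‖z‖ * (s - s⁻¹) ≤ ‖z * s + conj z * s⁻¹‖ := by
  have h := norm_sub_le (z * s + conj z * s⁻¹) (conj z * s⁻¹)
  rw [add_sub_cancel_right, norm_mul, norm_mul, RCLike.norm_conj, norm_real, norm_real,
    Real.norm_of_nonneg hs.le, Real.norm_of_nonneg (inv_nonneg.2 hs.le)] at h
  nlinarith

/-- For `1 < r < R` and `f(w) = a₀ + Σ_{n≥1} aₙ (wⁿ + w⁻ⁿ)` holomorphic on {1 < |w| < R}
with `Re f > 0`, one has `|aₙ| (rⁿ - r⁻ⁿ) ≤ 2 Re a₀` for each n ≥ 1. -/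
theorem coeff_bound_circle (R r : ℝ) (hr : 1 < r) (hrR : r < R) (a : ℕ → ℂ) (f : ℂ → ℂ)
    (hf : ∀ w : ℂ, 1 < ‖w‖ → ‖w‖ < R →
      HasSum (fun n : ℕ => a (n + 1) * (w ^ (n + 1) + (w⁻¹) ^ (n + 1))) (f w - a 0))
    (hre : ∀ w : ℂ, 1 < ‖w‖ → ‖w‖ < R → 0 < (f w).re) :
    ∀ n : ℕ, 1 ≤ n → ‖a n‖ * (r ^ n - (r ^ n)⁻¹) ≤ 2 * (a 0).re := by
  intro n _
  have hr_abs : |r| = r := abs_of_pos (one_pos.trans hr)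
  have hnorm : ∀ θ, ‖circleMap 0 r θ‖ = r := fun θ => by rw [norm_circleMap_zero, hr_abs]
  have hc : Summable fun m : ℤ => ‖a m.natAbs‖ * |r| ^ m := by
    rw [hr_abs]; exact summable_norm_mul_zpow_natAbs_of_hasSum_symm hf hr hrR
  have hlaurent : ∀ θ, HasSum (fun m : ℤ => a m.natAbs * circleMap 0 r θ ^ m)
      (f (circleMap 0 r θ)) := fun θ =>
    hasSum_laurent_of_hasSum_symm hf (by rwa [hnorm]) (by rwa [hnorm])
  have hbound := norm_add_conj_le_two_re_of_re_nonneg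
    (continuous_of_hasSum_laurent_circleMap hc hlaurent)
    (fun θ => (hre _ (by rwa [hnorm]) (by rwa [hnorm])).le)
    (integral_mul_exp_of_hasSum_laurent_circleMap hc hlaurent) n
  simp only [Int.natAbs_natCast, Int.natAbs_neg, Int.natAbs_zero, zpow_natCast, zpow_neg,
    zpow_zero, mul_one, map_mul, map_inv₀, map_pow, conj_ofReal] at hbound
  calc ‖a n‖ * (r ^ n - (r ^ n)⁻¹)
      ≤ ‖a n * (r ^ n : ℝ) + conj (a n) * ((r ^ n)⁻¹ : ℝ)‖ :=
        norm_mul_sub_inv_le_norm_mul_add_conj_mul_inv _ (by positivity)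
    _ ≤ 2 * (a 0).re := by push_cast; exact hbound
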